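/- Let X be a subcube of a cluster of HCN_n inducing a copy of Q_g, where 1 ≤ g ≤ n−1. Then the neighborhood N(X) of X in HCN_n (vertices outside X adjacent to some vertex of X) has size exactly 2^g(n+1−g). -/

import Mathlib

/-- Vertices of the hierarchical cubic network: pairs (cluster label, position). -/
abbrev HVert (n : ℕ) := (Fin n → Bool) × (Fin n → Bool)

/-- The hierarchical cubic network HCN_n. Within a cluster (same first coordinate),
two vertices are adjacent iff their second coordinates differ in exactly one bit.
Crossing edges: (x,y) with x ≠ y is adjacent to (y,x); (x,x) is adjacent to (x̄,x̄). -/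
def HCN (n : ℕ) : SimpleGraph (HVert n) :=
  SimpleGraph.fromRel (fun u v =>
    (u.1 = v.1 ∧ (Finset.univ.filter (fun i => u.2 i ≠ v.2 i)).card = 1) ∨
    (u.1 ≠ u.2 ∧ v = (u.2, u.1)) ∨
    (u.1 = u.2 ∧ v = (fun i => !u.1 i, fun i => !u.2 i)))

/-- `u` and `v` are joined by a crossing edge of HCN_n. -/
def IsCrossing (n : ℕ) (u v : HVert n) : Prop :=
  ((u.1 ≠ u.2 ∧ v = (u.2, u.1)) ∨ (u.1 = u.2 ∧ v = (fun i => !u.1 i, fun i => !u.2 i))) ∨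
  ((v.1 ≠ v.2 ∧ u = (v.2, v.1)) ∨ (v.1 = v.2 ∧ u = (fun i => !v.1 i, fun i => !v.2 i)))

/-- `X` is a subcube of a cluster of HCN_n inducing a copy of Q_g: all vertices
of `X` share the first coordinate `x`, and their second coordinates form a
g-dimensional subcube (they agree on a set `S` of `n - g` fixed coordinates). -/
def IsClusterSubcube (n g : ℕ) (X : Set (HVert n)) : Prop :=
  ∃ (x : Fin n → Bool) (S : Finset (Fin n)) (f : Fin n → Bool),
    S.card = n - g ∧ X = {v | v.1 = x ∧ ∀ i ∈ S, v.2 i = f i}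

/-- The (open) neighborhood of a vertex set in HCN_n. -/
def setNbhd (n : ℕ) (X : Set (HVert n)) : Set (HVert n) :=
  {w | w ∉ X ∧ ∃ v ∈ X, (HCN n).Adj v w}

/-! Write `X = {x} ×ˢ C` with `C` a `g`-dimensional subcube of the `n`-cube. A neighbour of `X`
either stays in cluster `x`, and is then a word at Hamming distance one from `C`, necessarily
obtained by flipping one of the `n - g` fixed coordinates of a point of `C` (these `(n - g) 2^g`
flips are pairwise distinct); or it leaves the cluster, and is then the unique crossing neighbour
of a point of `X`. The crossing map is an involution, so the latter contribute another `2^g`. -/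

open Function Finset

section Hypercube

variable {ι : Type*} [DecidableEq ι]

theorem card_filter_ne_eq_one_iff [Fintype ι] {y z : ι → Bool} :
    #{i | y i ≠ z i} = 1 ↔ ∃ i, z = update y i (!y i) := by
  constructor
  · intro h
    obtain ⟨i, hi⟩ := card_eq_one.mp h
    have hdiff : ∀ j, y j ≠ z j ↔ j = i := fun j => by
      simpa using congrArg (j ∈ ·) hi
    refine ⟨i, funext fun j => ?_⟩
    rcases eq_or_ne j i with rfl | hj
    · simpa [Bool.eq_not, eq_comm] using (hdiff j).mpr rfl
    · simpa [hj, eq_comm] using mt (hdiff j).mp hj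
  · rintro ⟨i, rfl⟩
    rw [card_eq_one]
    refine ⟨i, ?_⟩
    ext j
    rcases eq_or_ne j i with rfl | hj <;> simp [*]

def subcube (S : Finset ι) (f : ι → Bool) : Set (ι → Bool) :=
  {y | ∀ i ∈ S, y i = f i}

def cubeNbhd (C : Set (ι → Bool)) : Set (ι → Bool) :=
  {z | z ∉ C ∧ ∃ y ∈ C, ∃ i, z = update y i (!y i)}

theorem ncard_subcube [Fintype ι] (S : Finset ι) (f : ι → Bool) :
    (subcube S f).ncard = 2 ^ (Fintype.card ι - #S) := by
  have hpi : subcube S f = ↑(Fintype.piFinset fun i => if i ∈ S then {f i} else univ) := by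
    ext y
    simp only [subcube, Set.mem_ofPred_eq, Fintype.coe_piFinset, Set.mem_univ_pi]
    refine forall_congr' fun i => ?_
    split_ifs <;> simp [*]
  rw [hpi, Set.ncard_coe_finset, Fintype.card_piFinset]
  simp [apply_ite Finset.card, prod_ite, filter_notMem_eq_sdiff, card_univ_sdiff]

theorem update_mem_subcube_iff {S : Finset ι} {f y : ι → Bool} (hy : y ∈ subcube S f) (i : ι) :
    update y i (!y i) ∈ subcube S f ↔ i ∉ S := by
  constructor
  · intro h hi
    simpa [hy i hi] using h i hi
  · intro hi j hj
    rw [update_of_ne (ne_of_mem_of_not_mem hj hi)]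
    exact hy j hj

theorem cubeNbhd_subcube (S : Finset ι) (f : ι → Bool) :
    cubeNbhd (subcube S f) =
      (fun p : ι × (ι → Bool) => update p.2 p.1 (!p.2 p.1)) '' (↑S ×ˢ subcube S f) := by
  ext z
  constructor
  · rintro ⟨hz, y, hy, i, rfl⟩
    have hi : i ∈ S := by_contra fun hi => hz ((update_mem_subcube_iff hy i).mpr hi)
    exact ⟨(i, y), ⟨hi, hy⟩, rfl⟩
  · rintro ⟨⟨i, y⟩, ⟨hi, hy⟩, rfl⟩
    exact ⟨fun h => (update_mem_subcube_iff hy i).mp h hi, y, hy, i, rfl⟩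

theorem ncard_cubeNbhd_subcube [Fintype ι] (S : Finset ι) (f : ι → Bool) :
    (cubeNbhd (subcube S f)).ncard = #S * 2 ^ (Fintype.card ι - #S) := by
  rw [cubeNbhd_subcube, Set.InjOn.ncard_image, Set.ncard_prod, Set.ncard_coe_finset,
    ncard_subcube]
  rintro ⟨i, y⟩ ⟨hi, hy⟩ ⟨i', y'⟩ ⟨hi', hy'⟩ h
  dsimp only at h hi hy hi' hy'
  have hii' : i = i' := by
    by_contra hne
    have hyi := congrFun h i
    rw [update_self, update_of_ne hne, hy i hi, hy' i hi] at hyi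
    simp at hyi
  subst hii'
  simp only [Prod.mk.injEq, true_and]
  funext j
  rcases eq_or_ne j i with rfl | hj
  · rw [hy j hi, hy' j hi]
  · simpa [hj] using congrFun h j

end Hypercube

namespace HCN

variable {n : ℕ}

-- For `n = 0`, `cross u = u`: a loop, which `HCN` does not contain.
def cross (u : HVert n) : HVert n :=
  if u.2 = u.1 then (fun i => !u.1 i, fun i => !u.1 i) else (u.2, u.1)

theorem cross_involutive : Involutive (cross (n := n)) := by
  intro u
  by_cases h : u.2 = u.1 <;> simp [cross, h, Prod.ext_iff, Ne.symm]

theorem cross_fst_ne (hn : 0 < n) (u : HVert n) : (cross u).1 ≠ u.1 := by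
  unfold cross
  split_ifs with h
  · exact fun h' => Bool.not_ne_self _ (congrFun h' ⟨0, hn⟩)
  · exact h

theorem adj_iff (hn : 0 < n) {u v : HVert n} :
    (HCN n).Adj u v ↔ (v.1 = u.1 ∧ ∃ i, v.2 = update u.2 i (!u.2 i)) ∨ v = cross u := by
  have hrel : ∀ u v : HVert n,
      ((u.1 = v.1 ∧ #{i | u.2 i ≠ v.2 i} = 1) ∨ (u.1 ≠ u.2 ∧ v = (u.2, u.1)) ∨
        (u.1 = u.2 ∧ v = (fun i => !u.1 i, fun i => !u.2 i))) ↔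
      (v.1 = u.1 ∧ ∃ i, v.2 = update u.2 i (!u.2 i)) ∨ v = cross u := by
    intro u v
    rw [card_filter_ne_eq_one_iff, eq_comm (a := u.1)]
    by_cases h : u.2 = u.1 <;> simp [cross, h, eq_comm (a := u.1)]
  have hsymm : ∀ u v : HVert n, ((v.1 = u.1 ∧ ∃ i, v.2 = update u.2 i (!u.2 i)) ∨ v = cross u) →
      (u.1 = v.1 ∧ ∃ i, u.2 = update v.2 i (!v.2 i)) ∨ u = cross v := by
    rintro u v (⟨h1, i, h2⟩ | rfl)
    · exact Or.inl ⟨h1.symm, i, by simp [h2]⟩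
    · exact Or.inr (cross_involutive u).symm
  rw [HCN, SimpleGraph.fromRel_adj, hrel, hrel]
  constructor
  · rintro ⟨-, h | h⟩
    · exact h
    · exact hsymm v u h
  · intro h
    refine ⟨?_, Or.inl h⟩
    rintro rfl
    rcases h with ⟨-, i, hi⟩ | h
    · simpa using congrFun hi i
    · exact cross_fst_ne hn u (congrArg Prod.fst h).symm

theorem setNbhd_cluster (hn : 0 < n) (x : Fin n → Bool) (C : Set (Fin n → Bool)) :
    setNbhd n ({x} ×ˢ C) = {x} ×ˢ cubeNbhd C ∪ cross '' ({x} ×ˢ C) := by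
  ext w
  simp only [setNbhd, cubeNbhd, Set.mem_union, Set.mem_image, Set.mem_prod,
    Set.mem_singleton_iff, Set.mem_ofPred_eq, Prod.exists]
  constructor
  · rintro ⟨hw, a, y, ⟨rfl, hy⟩, hadj⟩
    rcases (adj_iff hn).mp hadj with ⟨hw1, i, hw2⟩ | rfl
    · exact Or.inl ⟨hw1, fun h => hw ⟨hw1, h⟩, y, hy, i, hw2⟩
    · exact Or.inr ⟨a, y, ⟨rfl, hy⟩, rfl⟩
  · rintro (⟨hw1, hw2, y, hy, i, hwy⟩ | ⟨a, y, ⟨rfl, hy⟩, rfl⟩)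
    · refine ⟨fun h => hw2 h.2, x, y, ⟨rfl, hy⟩, (adj_iff hn).mpr (Or.inl ⟨hw1, i, hwy⟩)⟩
    · exact ⟨fun h => cross_fst_ne hn _ h.1, a, y, ⟨rfl, hy⟩, (adj_iff hn).mpr (Or.inr rfl)⟩

theorem ncard_setNbhd_cluster (hn : 0 < n) (x : Fin n → Bool) (C : Set (Fin n → Bool)) :
    (setNbhd n ({x} ×ˢ C)).ncard = (cubeNbhd C).ncard + C.ncard := by
  have hdisj : Disjoint ({x} ×ˢ cubeNbhd C) (cross '' ({x} ×ˢ C)) := by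
    rw [Set.disjoint_left]
    rintro _ ⟨hw1, -⟩ ⟨u, ⟨hu1, -⟩, rfl⟩
    exact cross_fst_ne hn u (hw1.trans hu1.symm)
  rw [setNbhd_cluster hn, Set.ncard_union_eq hdisj,
    Set.ncard_image_of_injective _ cross_involutive.injective]
  simp [Set.ncard_prod]

end HCN

/-- If X is a subcube of a cluster of HCN_n inducing Q_g, 1 ≤ g ≤ n-1, then
|N(X)| = 2^g (n+1-g). -/
theorem stmt_9 (n g : ℕ) (hg1 : 1 ≤ g) (hg2 : g ≤ n - 1)
    (X : Set (HVert n)) (hX : IsClusterSubcube n g X) :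
    (setNbhd n X).ncard = 2 ^ g * (n + 1 - g) := by
  obtain ⟨x, S, f, hS, rfl⟩ := hX
  have hcard : Fintype.card (Fin n) - #S = g := by rw [Fintype.card_fin, hS]; omega
  calc (setNbhd n ({x} ×ˢ subcube S f)).ncard
      = #S * 2 ^ g + 2 ^ g := by
        rw [HCN.ncard_setNbhd_cluster (by omega), ncard_cubeNbhd_subcube, ncard_subcube, hcard]
    _ = 2 ^ g * (n + 1 - g) := by rw [hS, show n + 1 - g = n - g + 1 by omega]; ring
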